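/- With A and A_σ as in the previous statement, define w_1 = (0,1,0)^T and w_2 = (1,0,1)^T. Then A_3 A_2 A_1^k w_1 = (1 − 1/2^k) w_2 and A_3 A_2 A_1^k w_2 = (1 − 1/2^k) w_1 + (1/2^k) 𝟙. Consequently, for any sequence k_1, k_2, ... of positive integers with Σ_γ 1/2^{k_γ} < ∞, the infinite product ⋯ A_3 A_2 A_1^{k_2} A_3 A_2 A_1^{k_1} applied to w_2 does not converge to a consensus vector (a multiple of 𝟙 plus convergent error), since Π_γ (1 − 1/2^{k_γ}) converges to a nonzero limit while the image alternates between directions w_1 and w_2. -/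

import Mathlib

open Filter

/-- The asynchronous iteration matrix: row `σ` comes from `A`, others from identity. -/
def asyncM {N : ℕ} (A : Matrix (Fin N) (Fin N) ℝ) (σ : Fin N) : Matrix (Fin N) (Fin N) ℝ :=
  Matrix.of fun i j => if i = σ then A i j else if i = j then 1 else 0

noncomputable def disc {N : ℕ} (x : Fin N → ℝ) : ℝ := (⨆ i, x i) - ⨅ i, x i

noncomputable def A18 : Matrix (Fin 3) (Fin 3) ℝ := !![1/2, 1/2, 0; 0, 0, 1; 1, 0, 0]

/-- One block `A₃ A₂ A₁^k`. -/
noncomputable def block18 (k : ℕ) : Matrix (Fin 3) (Fin 3) ℝ :=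
  asyncM A18 2 * asyncM A18 1 * asyncM A18 0 ^ k

/-- The product of the first `p` blocks: `B(k_p) ⋯ B(k_1)`. -/
noncomputable def iter18 (kseq : ℕ → ℕ) : ℕ → Matrix (Fin 3) (Fin 3) ℝ
  | 0 => 1
  | p + 1 => block18 (kseq (p + 1)) * iter18 kseq p

/-!
The block `A₃ A₂ A₁^k` fixes `𝟙` and maps `w₂ ↦ (1 - 2^{-k}) w₁ + 2^{-k} 𝟙`, `w₁ ↦ (1 - 2^{-k}) w₂`.
Hence after `p` blocks, `w₂` is sent to `(∏_{γ ≤ p} (1 - 2^{-k_γ})) w + t 𝟙` with `w ∈ {w₁, w₂}`,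
whose discrepancy is exactly that product. Since `1 - a ≥ exp (-2a)` for `a ≤ 1/2`, the partial
products stay above `exp (-2 Σ 2^{-k_γ}) > 0`.
-/

open Matrix Finset Real

theorem disc_eq_sub {N : ℕ} (x : Fin N → ℝ) (i j : Fin N) (hi : ∀ k, x k ≤ x i)
    (hj : ∀ k, x j ≤ x k) : disc x = x i - x j := by
  have : Nonempty (Fin N) := ⟨i⟩
  have hsup : ⨆ k, x k = x i :=
    le_antisymm (ciSup_le hi) (le_ciSup (Set.finite_range x).bddAbove i)
  have hinf : ⨅ k, x k = x j :=
    le_antisymm (ciInf_le (Set.finite_range x).bddBelow j) (le_ciInf hj)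
  rw [disc, hsup, hinf]

theorem disc_add_smul_one {N : ℕ} [NeZero N] (x : Fin N → ℝ) (c : ℝ) :
    disc (x + c • 1) = disc x := by
  have hsup := (OrderIso.addRight c).map_ciSup (Set.finite_range x).bddAbove
  have hinf := (OrderIso.addRight c).map_ciInf (Set.finite_range x).bddBelow
  simp only [OrderIso.addRight_apply] at hsup hinf
  simp only [disc, Pi.add_apply, Pi.smul_apply, Pi.one_apply, smul_eq_mul, mul_one, ← hsup,
    ← hinf]
  ring

theorem disc_smul {N : ℕ} (x : Fin N → ℝ) {a : ℝ} (ha : 0 ≤ a) : disc (a • x) = a * disc x := by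
  simp only [disc, Pi.smul_apply, smul_eq_mul, ← Real.mul_iSup_of_nonneg ha,
    ← Real.mul_iInf_of_nonneg ha, mul_sub]

theorem exp_neg_two_mul_le_one_sub {a : ℝ} (h0 : 0 ≤ a) (h1 : a ≤ 1 / 2) :
    exp (-(2 * a)) ≤ 1 - a := by
  have hinv : exp (-(2 * a)) * exp (2 * a) = 1 := by rw [← exp_add, neg_add_cancel, exp_zero]
  nlinarith [add_one_le_exp (2 * a), exp_pos (-(2 * a))]

theorem exp_neg_two_mul_tsum_le_prod_one_sub {ι : Type*} {u : ι → ℝ} (h0 : ∀ i, 0 ≤ u i)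
    (h1 : ∀ i, u i ≤ 1 / 2) (hu : Summable u) (s : Finset ι) :
    exp (-(2 * ∑' i, u i)) ≤ ∏ i ∈ s, (1 - u i) :=
  calc exp (-(2 * ∑' i, u i))
      ≤ exp (-(2 * ∑ i ∈ s, u i)) := by
        gcongr
        exact hu.sum_le_tsum s fun i _ => h0 i
    _ = ∏ i ∈ s, exp (-(2 * u i)) := by rw [mul_sum, ← sum_neg_distrib, exp_sum]
    _ ≤ ∏ i ∈ s, (1 - u i) :=
        prod_le_prod (fun i _ => (exp_pos _).le) fun i _ =>
          exp_neg_two_mul_le_one_sub (h0 i) (h1 i)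

theorem asyncM_A18_zero_pow (k : ℕ) :
    asyncM A18 0 ^ k = !![(1 / 2 : ℝ) ^ k, 1 - (1 / 2) ^ k, 0; 0, 1, 0; 0, 0, 1] := by
  induction k with
  | zero => ext i j; fin_cases i <;> fin_cases j <;> simp [one_apply]
  | succ k ih =>
    rw [pow_succ, ih]
    ext i j
    fin_cases i <;> fin_cases j <;> simp [asyncM, A18, mul_apply, Fin.sum_univ_three] <;> ring

theorem block18_eq (k : ℕ) :
    block18 k =
      !![(1 / 2 : ℝ) ^ k, 1 - (1 / 2) ^ k, 0; 0, 0, 1; (1 / 2) ^ k, 1 - (1 / 2) ^ k, 0] := by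
  rw [block18, asyncM_A18_zero_pow]
  ext i j
  fin_cases i <;> fin_cases j <;> simp [asyncM, A18, mul_apply, Fin.sum_univ_three]

theorem block18_mulVec_w1 (k : ℕ) :
    block18 k *ᵥ ![0, 1, 0] = (1 - (1 / 2 : ℝ) ^ k) • ![1, 0, 1] := by
  rw [block18_eq]
  ext i
  fin_cases i <;> simp [mulVec, dotProduct, Fin.sum_univ_three]

theorem block18_mulVec_w2 (k : ℕ) :
    block18 k *ᵥ ![1, 0, 1] =
      (1 - (1 / 2 : ℝ) ^ k) • ![0, 1, 0] + ((1 / 2 : ℝ) ^ k) • ![1, 1, 1] := by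
  rw [block18_eq]
  ext i
  fin_cases i <;> simp [mulVec, dotProduct, Fin.sum_univ_three]

theorem block18_mulVec_one (k : ℕ) : block18 k *ᵥ 1 = 1 := by
  rw [block18_eq]
  ext i
  fin_cases i <;> simp [mulVec, dotProduct, Fin.sum_univ_three]

noncomputable def orbitDir (p : ℕ) : Fin 3 → ℝ := if Even p then ![1, 0, 1] else ![0, 1, 0]

theorem disc_orbitDir (p : ℕ) : disc (orbitDir p) = 1 := by
  unfold orbitDir
  split_ifs
  · rw [disc_eq_sub _ 0 1] <;> simp [Fin.forall_fin_succ]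
  · rw [disc_eq_sub _ 1 0] <;> simp [Fin.forall_fin_succ]

theorem block18_mulVec_orbitDir (k p : ℕ) :
    ∃ c : ℝ, block18 k *ᵥ orbitDir p = (1 - (1 / 2 : ℝ) ^ k) • orbitDir (p + 1) + c • 1 := by
  have hones : (![1, 1, 1] : Fin 3 → ℝ) = 1 := by ext i; fin_cases i <;> rfl
  by_cases hp : Even p
  · refine ⟨(1 / 2) ^ k, ?_⟩
    simp only [orbitDir, Nat.even_add_one, hp, not_true_eq_false, if_true, if_false,
      block18_mulVec_w2, hones]
  · refine ⟨0, ?_⟩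
    simp only [orbitDir, Nat.even_add_one, hp, not_false_eq_true, if_true, if_false,
      block18_mulVec_w1, zero_smul, add_zero]

theorem iter18_mulVec_w2 (kseq : ℕ → ℕ) (p : ℕ) :
    ∃ t : ℝ, iter18 kseq p *ᵥ ![1, 0, 1] =
      (∏ γ ∈ Icc 1 p, (1 - (1 / 2 : ℝ) ^ kseq γ)) • orbitDir p + t • 1 := by
  induction p with
  | zero => exact ⟨0, by simp [iter18, orbitDir]⟩
  | succ p ih =>
    obtain ⟨t, ht⟩ := ih
    obtain ⟨c, hc⟩ := block18_mulVec_orbitDir (kseq (p + 1)) p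
    refine ⟨(∏ γ ∈ Icc 1 p, (1 - (1 / 2 : ℝ) ^ kseq γ)) * c + t, ?_⟩
    rw [iter18, ← mulVec_mulVec, ht, mulVec_add, mulVec_smul, mulVec_smul, hc,
      block18_mulVec_one, prod_Icc_succ_top (by omega)]
    module

theorem disc_iter18_mulVec_w2 (kseq : ℕ → ℕ) (p : ℕ) :
    disc (iter18 kseq p *ᵥ ![1, 0, 1]) = ∏ γ ∈ Icc 1 p, (1 - (1 / 2 : ℝ) ^ kseq γ) := by
  obtain ⟨t, ht⟩ := iter18_mulVec_w2 kseq p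
  have hnonneg : 0 ≤ ∏ γ ∈ Icc 1 p, (1 - (1 / 2 : ℝ) ^ kseq γ) :=
    prod_nonneg fun γ _ => sub_nonneg.2 (pow_le_one₀ (by norm_num) (by norm_num))
  rw [ht, disc_add_smul_one, disc_smul _ hnonneg, disc_orbitDir, mul_one]

/-- The blocks swap `w₁` and `w₂` up to vanishing error, and when `Σ 2^{-k_γ} < ∞`
the infinite product applied to `w₂` does not converge to consensus. -/
theorem async_product_no_consensus :
    (∀ k : ℕ,
      (block18 k).mulVec ![0, 1, 0] = (1 - (1/2 : ℝ) ^ k) • ![1, 0, 1] ∧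
      (block18 k).mulVec ![1, 0, 1] =
        (1 - (1/2 : ℝ) ^ k) • ![0, 1, 0] + ((1/2 : ℝ) ^ k) • ![1, 1, 1]) ∧
    ∀ kseq : ℕ → ℕ, (∀ γ, 1 ≤ kseq γ) →
      Summable (fun γ => ((1 : ℝ) / 2) ^ kseq γ) →
      ¬ Tendsto (fun p => disc ((iter18 kseq p).mulVec ![1, 0, 1])) atTop (nhds 0) := by
  refine ⟨fun k => ⟨block18_mulVec_w1 k, block18_mulVec_w2 k⟩, fun kseq hk hsum hlim => ?_⟩
  have hpos : 0 < exp (-(2 * ∑' γ, ((1 : ℝ) / 2) ^ kseq γ)) := exp_pos _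
  have hbound (p : ℕ) :
      exp (-(2 * ∑' γ, ((1 : ℝ) / 2) ^ kseq γ)) ≤ disc (iter18 kseq p *ᵥ ![1, 0, 1]) := by
    rw [disc_iter18_mulVec_w2]
    refine exp_neg_two_mul_tsum_le_prod_one_sub (fun γ => by positivity) (fun γ => ?_) hsum _
    exact pow_le_of_le_one (by norm_num) (by norm_num) (Nat.one_le_iff_ne_zero.1 (hk γ))
  obtain ⟨p, hp⟩ := (hlim.eventually_lt_const hpos).exists
  exact (hbound p).not_gt hp
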